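/- Let V be a finite-dimensional real vector space and T : V → V a linear automorphism whose only complex eigenvalue is 1 (i.e. the characteristic polynomial of T is (t−1)^{dim V}). Suppose S is a finite set of nonzero vectors spanning V such that for each s ∈ S there exist s' ∈ S and a real λ > 0 with T(s) = λ s'. Then T is the identity map on V. -/

import Mathlib

/-!
Since `T - 1` is nilpotent by Cayley–Hamilton, an eigenvector of a power `T ^ m` (`m ≥ 1`) has
eigenvalue `1`, and a vector fixed by `T ^ m` is fixed by `T`: in characteristic zero
`1 + X + ⋯ + X ^ (m - 1)` is coprime to `(X - 1) ^ N`, so it acts invertibly.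
Following one `s ∈ S` along `T`, the rays `ℝ_{>0} • T ^ k s` all pass through `S`, so by
pigeonhole `T ^ i s` is an eigenvector of some `T ^ (j - i)` with `i < j`. Hence `T` fixes
`T ^ i s`, so by injectivity it fixes `s`, and `S` spans `V`.
-/

open Polynomial

theorem isNilpotent_pow_sub_one {R : Type*} [Ring R] {x : R} (hx : IsNilpotent (x - 1)) (m : ℕ) :
    IsNilpotent (x ^ m - 1) := by
  rw [← geom_sum_mul]
  exact Commute.isNilpotent_mul_left (Commute.sum_left _ _ _ fun i _ =>
    ((Commute.refl x).pow_left i).sub_right (Commute.one_right _)) hx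

theorem Polynomial.isCoprime_geom_sum_X_sub_one {K : Type*} [Field K] [CharZero K] {m : ℕ}
    (hm : m ≠ 0) :
    IsCoprime (∑ i ∈ Finset.range m, X ^ i : K[X]) (X - 1) := by
  rw [← C_1, isCoprime_comm, (irreducible_X_sub_C 1).coprime_iff_not_dvd, dvd_iff_isRoot]
  simpa [IsRoot] using hm

namespace Module.End

variable {K V : Type*} [Field K] [AddCommGroup V] [Module K V]

theorem isNilpotent_sub_one_of_charpoly_eq [FiniteDimensional K V] {T : End K V}
    (hT : T.charpoly = (X - 1) ^ finrank K V) : IsNilpotent (T - 1) :=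
  ⟨finrank K V, by simpa [hT] using T.aeval_self_charpoly⟩

theorem eq_one_of_isNilpotent_sub_one_of_apply_eq_smul {T : End K V} (hT : IsNilpotent (T - 1))
    {v : V} (hv : v ≠ 0) {c : K} (hTv : T v = c • v) : c = 1 := by
  have : (T - 1).HasEigenvalue (c - 1) :=
    hasEigenvalue_of_hasEigenvector ⟨mem_eigenspace_iff.mpr (by simp [hTv, sub_smul]), hv⟩
  exact sub_eq_zero.mp (this.isNilpotent_of_isNilpotent hT).eq_zero

theorem apply_eq_self_of_pow_apply_eq_self [CharZero K] {T : End K V} (hT : IsNilpotent (T - 1))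
    {m : ℕ} (hm : m ≠ 0) {v : V} (hv : (T ^ m) v = v) : T v = v := by
  obtain ⟨N, hN⟩ := hT
  obtain ⟨a, b, hab⟩ := (isCoprime_geom_sum_X_sub_one (K := K) hm).pow_right (n := N)
  have hab' := congrArg (aeval T) hab
  simp only [map_add, map_mul, map_pow, map_sub, map_sum, aeval_X, map_one, hN, mul_zero,
    add_zero] at hab'
  have : (T - 1) v = 0 := calc
    (T - 1) v = (aeval T a * (∑ i ∈ Finset.range m, T ^ i) * (T - 1)) v := by rw [hab', one_mul]
    _ = aeval T a ((T ^ m - 1) v) := by rw [mul_assoc, geom_sum_mul]; rfl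
    _ = 0 := by simp [hv]
  simpa [sub_eq_zero] using this

theorem apply_eq_self_of_pow_apply_eq_smul [CharZero K] {T : End K V} (hT : IsNilpotent (T - 1))
    {m : ℕ} (hm : m ≠ 0) {v : V} (hv : v ≠ 0) {c : K} (hTv : (T ^ m) v = c • v) :
    T v = v := by
  rw [eq_one_of_isNilpotent_sub_one_of_apply_eq_smul (isNilpotent_pow_sub_one hT m) hv hTv,
    one_smul] at hTv
  exact apply_eq_self_of_pow_apply_eq_self hT hm hTv

section Rays

variable [LinearOrder K] [IsStrictOrderedRing K] {T : End K V} {S : Set V}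

theorem exists_mem_pow_apply_eq_pos_smul
    (hTS : ∀ s ∈ S, ∃ s' ∈ S, ∃ l : K, 0 < l ∧ T s = l • s')
    (k : ℕ) {s : V} (hs : s ∈ S) : ∃ u ∈ S, ∃ c : K, 0 < c ∧ (T ^ k) s = c • u := by
  induction k with
  | zero => exact ⟨s, hs, 1, one_pos, by simp⟩
  | succ k ih =>
    obtain ⟨u, hu, c, hc, hTk⟩ := ih
    obtain ⟨u', hu', l, hl, hTu⟩ := hTS u hu
    exact ⟨u', hu', c * l, mul_pos hc hl, by
      rw [pow_succ', mul_apply, hTk, map_smul, hTu, smul_smul]⟩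

theorem apply_eq_self_of_mem_of_forall_exists_pos_smul (hinj : Function.Injective T)
    (hT : IsNilpotent (T - 1)) (hS : S.Finite) (hS0 : 0 ∉ S)
    (hTS : ∀ s ∈ S, ∃ s' ∈ S, ∃ l : K, 0 < l ∧ T s = l • s') {s : V} (hs : s ∈ S) :
    T s = s := by
  choose u huS c hc hTc using fun k => exists_mem_pow_apply_eq_pos_smul hTS k hs
  obtain ⟨i, j, hij, hu⟩ := hS.exists_lt_map_eq_of_forall_mem huS
  have hw0 : (T ^ i) s ≠ 0 := by
    rw [hTc]
    exact smul_ne_zero (hc i).ne' (ne_of_mem_of_not_mem (huS i) hS0)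
  have hw : (T ^ (j - i)) ((T ^ i) s) = (c j / c i) • (T ^ i) s := by
    rw [← mul_apply, ← pow_add, Nat.sub_add_cancel hij.le, hTc, hTc, hu, smul_smul,
      div_mul_cancel₀ _ (hc i).ne']
  have hTw := apply_eq_self_of_pow_apply_eq_smul hT (Nat.sub_ne_zero_of_lt hij) hw0 hw
  rw [← mul_apply, ← pow_succ', pow_succ, mul_apply] at hTw
  exact (hinj.iterate i) (by simpa [coe_pow] using hTw)

end Rays

end Module.End

theorem stmt_6 {V : Type*} [AddCommGroup V] [Module ℝ V] [FiniteDimensional ℝ V]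
    (T : V →ₗ[ℝ] V) (hTbij : Function.Bijective T)
    (hchar : T.charpoly = (Polynomial.X - 1) ^ (Module.finrank ℝ V))
    (S : Finset V) (hS0 : (0 : V) ∉ S) (hSspan : Submodule.span ℝ (S : Set V) = ⊤)
    (hperm : ∀ s ∈ S, ∃ s' ∈ S, ∃ l : ℝ, 0 < l ∧ T s = l • s') :
    T = LinearMap.id :=
  LinearMap.ext_on hSspan fun _ hs =>
    Module.End.apply_eq_self_of_mem_of_forall_exists_pos_smul hTbij.injective
      (Module.End.isNilpotent_sub_one_of_charpoly_eq hchar) S.finite_toSet hS0 hperm hs
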